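/- arXiv:2208.06577 — 3 statements merged into one kernel-verified Lean document; each statement's English description precedes it below -/
import Mathlib

section
/- Let B ⊂ ℝ³ be a closed ball of radius R > 0 (with arbitrary center). Then the integral over the set {(s,t) ∈ ℝ² : (s+t, s−t, 4st) ∈ B} of the function 2√(1+8s²) with respect to Lebesgue measure on ℝ² is at most πR². -/
/-!
Slice the region at a fixed first coordinate `s`. Since
`(s+t-a)² + (s-t-b)² = 2(s-σ)² + 2(t-α)²` with `σ = (a+b)/2`, `α = (a-b)/2`, the slice is the set of
`t` with `2(t-α)² + (4st-e)² ≤ R² - 2(s-σ)²`. The left side is a quadratic in `t` with leading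
coefficient `2 + 16s² = (2√(1+8s²))² / 2`, so the slice is an interval of length at most
`2√((R² - 2(s-σ)²)/(2+16s²))`, and the weight cancels exactly: weight × length is at most
`2√(2R² - (2(s-σ))²)`. Integrating in `s` and substituting `u = 2(s-σ)` leaves half the area of a
disc of radius `√2 R`, which is `πR²`.
-/

open MeasureTheory ENNReal

theorem volume_setOf_sq_sub_le (m r : ℝ) :
    volume {t : ℝ | (t - m) ^ 2 ≤ r} = ENNReal.ofReal (2 * √r) := by
  rcases lt_or_ge r 0 with hr | hr
  · have : {t : ℝ | (t - m) ^ 2 ≤ r} = ∅ :=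
      Set.eq_empty_of_forall_notMem fun t ht => (sq_nonneg (t - m)).not_gt (ht.trans_lt hr)
    simp [this, Real.sqrt_eq_zero_of_nonpos hr.le]
  · have : {t : ℝ | (t - m) ^ 2 ≤ r} = Metric.closedBall m √r := by
      ext t
      rw [Set.mem_ofPred_eq, Metric.mem_closedBall, Real.dist_eq, Real.le_sqrt (abs_nonneg _) hr,
        sq_abs]
    rw [this, Real.volume_closedBall]

/-- Area of a disc by Cavalieri's principle. -/
theorem lintegral_ofReal_two_mul_sqrt_sq_sub_sq (r : ℝ) :
    ∫⁻ u, ENNReal.ofReal (2 * √(r ^ 2 - u ^ 2)) = ENNReal.ofReal (Real.pi * r ^ 2) := by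
  set D := {p : ℝ × ℝ | p.1 ^ 2 + p.2 ^ 2 ≤ r ^ 2}
  have hD : MeasurableSet D := measurableSet_le (by fun_prop) (by fun_prop)
  have hdisc : Complex.measurableEquivRealProd ⁻¹' D = Metric.closedBall 0 |r| := by
    ext z
    simp [D, Complex.measurableEquivRealProd, Complex.norm_def, Complex.normSq_apply,
      Real.sqrt_le_left (abs_nonneg r), sq]
  have hslice (u : ℝ) : Prod.mk u ⁻¹' D = {v : ℝ | (v - 0) ^ 2 ≤ r ^ 2 - u ^ 2} := by
    ext v
    simp [D, le_sub_iff_add_le']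
  have hvol := Complex.volume_preserving_equiv_real_prod.measure_preimage hD.nullMeasurableSet
  rw [hdisc, Complex.volume_closedBall, Measure.volume_eq_prod, Measure.prod_apply hD] at hvol
  simp_rw [hslice, volume_setOf_sq_sub_le] at hvol
  rw [← hvol, ENNReal.ofReal_mul Real.pi_pos.le, ← sq_abs, ENNReal.ofReal_pow (abs_nonneg r),
    mul_comm, ← ENNReal.ofReal_coe_nnreal, NNReal.coe_real_pi]

theorem lintegral_comp_mul_sub (f : ℝ → ℝ≥0∞) {a : ℝ} (ha : a ≠ 0) (b : ℝ) :
    ∫⁻ x, f (a * (x - b)) = ENNReal.ofReal |a⁻¹| * ∫⁻ x, f x := by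
  rw [lintegral_sub_right_eq_self (fun x => f (a * x)) b, ← smul_eq_mul, ← lintegral_smul_measure,
    ← Real.map_volume_mul_left ha]
  exact (lintegral_map_equiv f (Homeomorph.mulLeft₀ a ha).toMeasurableEquiv).symm

theorem setLIntegral_comp_fst_eq_lintegral_mul_measure_prodMk {α β : Type*} [MeasurableSpace α]
    [MeasurableSpace β] {μ : Measure α} {ν : Measure β} [SFinite ν] {A : Set (α × β)}
    (hA : MeasurableSet A) {f : α → ℝ≥0∞} (hf : Measurable f) :
    ∫⁻ p in A, f p.1 ∂μ.prod ν = ∫⁻ x, f x * ν (Prod.mk x ⁻¹' A) ∂μ := by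
  have hfA : Measurable (A.indicator fun p : α × β => f p.1) :=
    (hf.comp measurable_fst).indicator hA
  rw [← lintegral_indicator hA, lintegral_prod _ hfA.aemeasurable]
  refine lintegral_congr fun x => ?_
  rw [← lintegral_indicator_const (measurable_prodMk_left hA)]
  rfl

theorem quadratic_ge_leading_mul_sq_sub_vertex {c : ℝ} (hc : 0 ≤ c) (q α e t : ℝ) :
    (c + q ^ 2) * (t - (c * α + q * e) / (c + q ^ 2)) ^ 2 ≤ c * (t - α) ^ 2 + (q * t - e) ^ 2 := by
  rcases (show 0 ≤ c + q ^ 2 by positivity).eq_or_lt with hk | hk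
  · rw [← hk, zero_mul]
    positivity
  · have : c * (t - α) ^ 2 + (q * t - e) ^ 2 = (c + q ^ 2) * (t - (c * α + q * e) / (c + q ^ 2)) ^ 2
        + c * (e - q * α) ^ 2 / (c + q ^ 2) := by
      field_simp
      ring
    rw [this, le_add_iff_nonneg_right]
    positivity

theorem saddle_slice_subset (a b e R s : ℝ) :
    {t : ℝ | (s + t - a) ^ 2 + (s - t - b) ^ 2 + (4 * s * t - e) ^ 2 ≤ R ^ 2} ⊆
      {t | (t - (2 * ((a - b) / 2) + 4 * s * e) / (2 + (4 * s) ^ 2)) ^ 2 ≤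
        (R ^ 2 - 2 * (s - (a + b) / 2) ^ 2) / (2 + (4 * s) ^ 2)} := by
  intro t ht
  have hvertex := quadratic_ge_leading_mul_sq_sub_vertex zero_le_two (4 * s) ((a - b) / 2) e t
  rw [Set.mem_ofPred_eq] at ht ⊢
  rw [le_div_iff₀ (by positivity)]
  nlinarith

theorem ofReal_mul_volume_saddle_slice_le (a b e R s : ℝ) :
    ENNReal.ofReal (2 * √(1 + 8 * s ^ 2)) *
        volume {t : ℝ | (s + t - a) ^ 2 + (s - t - b) ^ 2 + (4 * s * t - e) ^ 2 ≤ R ^ 2} ≤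
      ENNReal.ofReal (2 * √(2 * R ^ 2 - (2 * (s - (a + b) / 2)) ^ 2)) := by
  calc _ ≤ ENNReal.ofReal (2 * √(1 + 8 * s ^ 2)) * ENNReal.ofReal
          (2 * √((R ^ 2 - 2 * (s - (a + b) / 2) ^ 2) / (2 + (4 * s) ^ 2))) := by
        gcongr
        exact (measure_mono (saddle_slice_subset a b e R s)).trans (volume_setOf_sq_sub_le _ _).le
    _ = _ := by
        rw [← ENNReal.ofReal_mul (by positivity)]
        congr 1
        have hweight : (1 + 8 * s ^ 2) * ((R ^ 2 - 2 * (s - (a + b) / 2) ^ 2) / (2 + (4 * s) ^ 2)) =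
            (2 * R ^ 2 - (2 * (s - (a + b) / 2)) ^ 2) / 2 ^ 2 := by
          field_simp
          ring
        rw [mul_mul_mul_comm, ← Real.sqrt_mul (by positivity), hweight,
          Real.sqrt_div' _ (by positivity), Real.sqrt_sq zero_le_two]
        ring

theorem integral_over_saddle_preimage_le_general (c : ℝ × ℝ × ℝ) (R : ℝ) :
    ∫⁻ p in {p : ℝ × ℝ |
        (p.1 + p.2 - c.1) ^ 2 + (p.1 - p.2 - c.2.1) ^ 2 + (4 * p.1 * p.2 - c.2.2) ^ 2 ≤ R ^ 2},
      ENNReal.ofReal (2 * Real.sqrt (1 + 8 * p.1 ^ 2)) ≤ ENNReal.ofReal (Real.pi * R ^ 2) := by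
  have hA : MeasurableSet {p : ℝ × ℝ |
      (p.1 + p.2 - c.1) ^ 2 + (p.1 - p.2 - c.2.1) ^ 2 + (4 * p.1 * p.2 - c.2.2) ^ 2 ≤ R ^ 2} :=
    measurableSet_le (by fun_prop) (by fun_prop)
  have hsq : 2 * R ^ 2 = (√2 * R) ^ 2 := by rw [mul_pow, Real.sq_sqrt zero_le_two]
  rw [Measure.volume_eq_prod]
  calc _ = ∫⁻ s, ENNReal.ofReal (2 * √(1 + 8 * s ^ 2)) * volume {t : ℝ |
          (s + t - c.1) ^ 2 + (s - t - c.2.1) ^ 2 + (4 * s * t - c.2.2) ^ 2 ≤ R ^ 2} :=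
        setLIntegral_comp_fst_eq_lintegral_mul_measure_prodMk hA (by fun_prop)
    _ ≤ ∫⁻ s, ENNReal.ofReal (2 * √((√2 * R) ^ 2 - (2 * (s - (c.1 + c.2.1) / 2)) ^ 2)) :=
        lintegral_mono fun s => hsq ▸ ofReal_mul_volume_saddle_slice_le c.1 c.2.1 c.2.2 R s
    _ = ENNReal.ofReal |2⁻¹| * ENNReal.ofReal (Real.pi * (√2 * R) ^ 2) := by
        rw [lintegral_comp_mul_sub (fun u => ENNReal.ofReal (2 * √((√2 * R) ^ 2 - u ^ 2)))
          two_ne_zero, lintegral_ofReal_two_mul_sqrt_sq_sub_sq]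
    _ = ENNReal.ofReal (Real.pi * R ^ 2) := by
        rw [← ENNReal.ofReal_mul (abs_nonneg _), ← hsq]
        congr 1
        norm_num
        ring

/-- The integral of `2√(1+8s²)` over the parameters `(s,t)` for which the saddle
point `(s+t, s−t, 4st)` lies in a closed ball of radius `R` is at most `πR²`. -/
theorem integral_over_saddle_preimage_le (c : ℝ × ℝ × ℝ) (R : ℝ) (hR : 0 < R) :
    ∫⁻ p in {p : ℝ × ℝ |
        (p.1 + p.2 - c.1) ^ 2 + (p.1 - p.2 - c.2.1) ^ 2 + (4 * p.1 * p.2 - c.2.2) ^ 2 ≤ R ^ 2},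
      ENNReal.ofReal (2 * Real.sqrt (1 + 8 * p.1 ^ 2)) ≤ ENNReal.ofReal (Real.pi * R ^ 2) :=
  integral_over_saddle_preimage_le_general c R
end

section
/- Let b₁,b₂,b₃,b₄,b₅,s ∈ ℝ and let p(x,y,z) = (x−b₁)² − (y−b₂)² + s(b₃z + b₄ + b₅z³), with q(z) = b₃z + b₄ + b₅z³. Then at every point (x,y,z) ∈ ℝ³ with p(x,y,z) = 0, the identity ∇p · (Hess p) ∇pᵀ − |∇p|² Δp = −8s·q(z) − 24 b₅ s z ((x−b₁)² + (y−b₂)²) holds, where ∇p = (2(x−b₁), −2(y−b₂), s(b₃ + 3b₅z²)), Hess p = diag(2, −2, 6b₅sz), and Δp = 6b₅sz. -/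
open Matrix

/-- The mean-curvature numerator identity for the level set `p = 0`, where
`p(x,y,z) = (x−b₁)² − (y−b₂)² + s(b₃z + b₄ + b₅z³)`:
`∇p ⬝ (Hess p) ∇pᵀ − |∇p|² Δp = −8s·q(z) − 24b₅sz((x−b₁)² + (y−b₂)²)`. -/
theorem hessian_gradient_identity (b₁ b₂ b₃ b₄ b₅ s x y z : ℝ)
    (hp : (x - b₁) ^ 2 - (y - b₂) ^ 2 + s * (b₃ * z + b₄ + b₅ * z ^ 3) = 0) :
    let grad : Fin 3 → ℝ := ![2 * (x - b₁), -2 * (y - b₂), s * (b₃ + 3 * b₅ * z ^ 2)]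
    let hess : Matrix (Fin 3) (Fin 3) ℝ := Matrix.diagonal ![2, -2, 6 * b₅ * s * z]
    grad ⬝ᵥ (hess *ᵥ grad) - (grad ⬝ᵥ grad) * (6 * b₅ * s * z) =
      -8 * s * (b₃ * z + b₄ + b₅ * z ^ 3) -
        24 * b₅ * s * z * ((x - b₁) ^ 2 + (y - b₂) ^ 2) := by
  intro grad hess
  simp only [grad, hess, dotProduct, Matrix.mulVec, Fin.sum_univ_three, Matrix.diagonal, Matrix.cons_val_zero, Matrix.cons_val_one, Matrix.head_cons, Matrix.cons_val_two, Matrix.tail_cons, Matrix.of_apply]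
  norm_num [Fin.ext_iff]
  nlinarith [sq_nonneg (x-b₁), sq_nonneg (y-b₂), hp]
end

section
/- There exists h > 0 such that the following holds: for all a, b, c ∈ ℝ with a² + b² + c² = 1, there exists x₀ ∈ ℝ with −1/2 ≤ x₀ and x₀ + 1/8 ≤ 1/2 such that |a x³ + b x + c| > h for every x ∈ [x₀, x₀ + 1/8]. -/
set_option maxHeartbeats 1600000


lemma gap_abs {u v k : ℝ} (h : k ≤ v - u) : k ≤ |u - v| := by
  rw [abs_sub_comm]; exact le_trans h (le_abs_self _)

lemma prod3_abs {u v w k l m : ℝ} (hu : k ≤ |u|) (hv : l ≤ |v|) (hw : m ≤ |w|)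
    (hk : 0 ≤ k) (hl : 0 ≤ l) (hm : 0 ≤ m) : k * l * m ≤ |u * v * w| := by
  rw [abs_mul, abs_mul]
  exact mul_le_mul (mul_le_mul hu hv hl (abs_nonneg u)) hw hm
    (mul_nonneg (abs_nonneg _) (abs_nonneg _))

lemma div_bnd {y d k K : ℝ} (hy : |y| ≤ K) (hd : k ≤ |d|) (hk : 0 < k) :
    |y / d| ≤ K / k := by
  rw [abs_div]
  exact div_le_div₀ (le_trans (abs_nonneg y) hy) hy hk hd

lemma ha_id (a b c x₁ x₂ x₃ x₄ : ℝ)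
    (n12 : x₁ - x₂ ≠ 0) (n13 : x₁ - x₃ ≠ 0) (n14 : x₁ - x₄ ≠ 0)
    (n23 : x₂ - x₃ ≠ 0) (n24 : x₂ - x₄ ≠ 0) (n34 : x₃ - x₄ ≠ 0)
    (n21 : x₂ - x₁ ≠ 0) (n31 : x₃ - x₁ ≠ 0) (n41 : x₄ - x₁ ≠ 0)
    (n32 : x₃ - x₂ ≠ 0) (n42 : x₄ - x₂ ≠ 0) (n43 : x₄ - x₃ ≠ 0) :
    a = (a*x₁^3+b*x₁+c) / ((x₁-x₂)*(x₁-x₃)*(x₁-x₄))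
      + (a*x₂^3+b*x₂+c) / ((x₂-x₁)*(x₂-x₃)*(x₂-x₄))
      + (a*x₃^3+b*x₃+c) / ((x₃-x₁)*(x₃-x₂)*(x₃-x₄))
      + (a*x₄^3+b*x₄+c) / ((x₄-x₁)*(x₄-x₂)*(x₄-x₃)) := by
  field_simp
  ring

lemma hb_id (a b c x₁ x₂ : ℝ) (n12 : x₁ - x₂ ≠ 0) :
    b = ((a*x₁^3+b*x₁+c) - (a*x₂^3+b*x₂+c)) / (x₁-x₂) - a*(x₁^2+x₁*x₂+x₂^2) := by
  field_simp
  ring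

lemma abs4 (p q r s : ℝ) : |p + q + r + s| ≤ |p| + |q| + |r| + |s| := by
  calc |p + q + r + s| ≤ |p + q + r| + |s| := abs_add_le _ _
  _ ≤ (|p + q| + |r|) + |s| := by linarith [abs_add_le (p + q) r]
  _ ≤ (|p| + |q| + |r|) + |s| := by linarith [abs_add_le p q]
  _ = |p| + |q| + |r| + |s| := by ring

lemma bound_a (a b c x₁ x₂ x₃ x₄ : ℝ)
    (h1l : -(1/2) ≤ x₁) (h1r : x₁ ≤ -(3/8))
    (h2l : -(1/4) ≤ x₂) (h2r : x₂ ≤ -(1/8))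
    (h3l : (0:ℝ) ≤ x₃) (h3r : x₃ ≤ 1/8)
    (h4l : (1/4:ℝ) ≤ x₄) (h4r : x₄ ≤ 3/8)
    (hy1 : |a*x₁^3+b*x₁+c| ≤ 1/2048)
    (hy2 : |a*x₂^3+b*x₂+c| ≤ 1/2048)
    (hy3 : |a*x₃^3+b*x₃+c| ≤ 1/2048)
    (hy4 : |a*x₄^3+b*x₄+c| ≤ 1/2048) :
    |a| ≤ 1/5 := by
  have g12 : (1/8:ℝ) ≤ |x₁ - x₂| := gap_abs (by linarith)
  have g13 : (3/8:ℝ) ≤ |x₁ - x₃| := gap_abs (by linarith)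
  have g14 : (5/8:ℝ) ≤ |x₁ - x₄| := gap_abs (by linarith)
  have g21 : (1/8:ℝ) ≤ |x₂ - x₁| := by rw [abs_sub_comm]; exact g12
  have g23 : (1/8:ℝ) ≤ |x₂ - x₃| := gap_abs (by linarith)
  have g24 : (3/8:ℝ) ≤ |x₂ - x₄| := gap_abs (by linarith)
  have g31 : (3/8:ℝ) ≤ |x₃ - x₁| := by rw [abs_sub_comm]; exact g13
  have g32 : (1/8:ℝ) ≤ |x₃ - x₂| := by rw [abs_sub_comm]; exact g23
  have g34 : (1/8:ℝ) ≤ |x₃ - x₄| := gap_abs (by linarith)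
  have g41 : (5/8:ℝ) ≤ |x₄ - x₁| := by rw [abs_sub_comm]; exact g14
  have g42 : (3/8:ℝ) ≤ |x₄ - x₂| := by rw [abs_sub_comm]; exact g24
  have g43 : (1/8:ℝ) ≤ |x₄ - x₃| := by rw [abs_sub_comm]; exact g34
  have hd1 : (15/512:ℝ) ≤ |(x₁-x₂)*(x₁-x₃)*(x₁-x₄)| := by
    have := prod3_abs g12 g13 g14 (by norm_num) (by norm_num) (by norm_num)
    linarith
  have hd2 : (3/512:ℝ) ≤ |(x₂-x₁)*(x₂-x₃)*(x₂-x₄)| := by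
    have := prod3_abs g21 g23 g24 (by norm_num) (by norm_num) (by norm_num)
    linarith
  have hd3 : (3/512:ℝ) ≤ |(x₃-x₁)*(x₃-x₂)*(x₃-x₄)| := by
    have := prod3_abs g31 g32 g34 (by norm_num) (by norm_num) (by norm_num)
    linarith
  have hd4 : (15/512:ℝ) ≤ |(x₄-x₁)*(x₄-x₂)*(x₄-x₃)| := by
    have := prod3_abs g41 g42 g43 (by norm_num) (by norm_num) (by norm_num)
    linarith
  have t1 := div_bnd hy1 hd1 (by norm_num)
  have t2 := div_bnd hy2 hd2 (by norm_num)
  have t3 := div_bnd hy3 hd3 (by norm_num)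
  have t4 := div_bnd hy4 hd4 (by norm_num)
  have n12 : x₁ - x₂ ≠ 0 := by intro h; linarith
  have n13 : x₁ - x₃ ≠ 0 := by intro h; linarith
  have n14 : x₁ - x₄ ≠ 0 := by intro h; linarith
  have n23 : x₂ - x₃ ≠ 0 := by intro h; linarith
  have n24 : x₂ - x₄ ≠ 0 := by intro h; linarith
  have n34 : x₃ - x₄ ≠ 0 := by intro h; linarith
  have ha := ha_id a b c x₁ x₂ x₃ x₄ n12 n13 n14 n23 n24 n34
    (fun h => n12 (by linarith)) (fun h => n13 (by linarith))
    (fun h => n14 (by linarith)) (fun h => n23 (by linarith))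
    (fun h => n24 (by linarith)) (fun h => n34 (by linarith))
  have habs4 := abs4 ((a*x₁^3+b*x₁+c) / ((x₁-x₂)*(x₁-x₃)*(x₁-x₄)))
    ((a*x₂^3+b*x₂+c) / ((x₂-x₁)*(x₂-x₃)*(x₂-x₄)))
    ((a*x₃^3+b*x₃+c) / ((x₃-x₁)*(x₃-x₂)*(x₃-x₄)))
    ((a*x₄^3+b*x₄+c) / ((x₄-x₁)*(x₄-x₂)*(x₄-x₃)))
  rw [← ha] at habs4
  have e1 : (1/2048:ℝ)/(15/512) = 1/60 := by norm_num
  have e2 : (1/2048:ℝ)/(3/512) = 1/12 := by norm_num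
  rw [e1] at t1 t4
  rw [e2] at t2 t3
  linarith

lemma key (a b c x₁ x₂ x₃ x₄ : ℝ)
    (h1l : -(1/2) ≤ x₁) (h1r : x₁ ≤ -(3/8))
    (h2l : -(1/4) ≤ x₂) (h2r : x₂ ≤ -(1/8))
    (h3l : (0:ℝ) ≤ x₃) (h3r : x₃ ≤ 1/8)
    (h4l : (1/4:ℝ) ≤ x₄) (h4r : x₄ ≤ 3/8)
    (hy1 : |a*x₁^3+b*x₁+c| ≤ 1/2048)
    (hy2 : |a*x₂^3+b*x₂+c| ≤ 1/2048)
    (hy3 : |a*x₃^3+b*x₃+c| ≤ 1/2048)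
    (hy4 : |a*x₄^3+b*x₄+c| ≤ 1/2048) :
    a^2 + b^2 + c^2 < 1 := by
  have habs : |a| ≤ 1/5 :=
    bound_a a b c x₁ x₂ x₃ x₄ h1l h1r h2l h2r h3l h3r h4l h4r hy1 hy2 hy3 hy4
  -- bound b
  have n12 : x₁ - x₂ ≠ 0 := by intro h; linarith
  have hb := hb_id a b c x₁ x₂ n12
  have g12 : (1/8:ℝ) ≤ |x₁ - x₂| := gap_abs (by linarith)
  have hq : |x₁^2+x₁*x₂+x₂^2| ≤ 3/4 := by
    rw [abs_le]; constructor <;> nlinarith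
  have hdiff : |(a*x₁^3+b*x₁+c) - (a*x₂^3+b*x₂+c)| ≤ 2/2048 :=
    le_trans (abs_sub _ _) (by linarith)
  have tb := div_bnd hdiff g12 (by norm_num)
  have e3 : (2/2048:ℝ)/(1/8) = 1/128 := by norm_num
  rw [e3] at tb
  have hmm := mul_le_mul habs hq (abs_nonneg _) (by norm_num)
  have hbabs : |b| ≤ 1/128 + 3/20 := by
    rw [hb]
    refine le_trans (abs_sub _ _) ?_
    rw [abs_mul]
    linarith
  -- bound c
  have hx1abs : |x₁| ≤ 1/2 := by rw [abs_le]; constructor <;> linarith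
  have h3cube : |x₁^3| ≤ 1/8 := by
    rw [show x₁^3 = x₁*x₁*x₁ by ring, abs_mul, abs_mul]
    nlinarith [abs_nonneg x₁]
  have hcabs : |c| ≤ 1/2048 + 1/40 + 1/2 * (1/128 + 3/20) := by
    have hc : c = (a*x₁^3+b*x₁+c) - a*x₁^3 - b*x₁ := by ring
    rw [hc]
    refine le_trans (abs_sub _ _) ?_
    have h1 : |(a*x₁^3+b*x₁+c) - a*x₁^3| ≤ |a*x₁^3+b*x₁+c| + |a*x₁^3| := abs_sub _ _
    rw [abs_mul] at h1 ⊢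
    have ha3 := mul_le_mul habs h3cube (abs_nonneg _) (by norm_num)
    have hb1 := mul_le_mul hbabs hx1abs (abs_nonneg _) (by norm_num)
    nlinarith
  rw [abs_le] at habs hbabs hcabs
  have sa : a^2 ≤ (1/5)^2 := by nlinarith [habs.1, habs.2]
  have sb : b^2 ≤ (1/128+3/20)^2 := by nlinarith [hbabs.1, hbabs.2]
  have sc : c^2 ≤ (1/2048 + 1/40 + 1/2*(1/128+3/20))^2 := by nlinarith [hcabs.1, hcabs.2]
  nlinarith [sa, sb, sc]


/-- There is a uniform `h > 0` such that every cubic `ax³ + bx + c` with unit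
coefficient vector satisfies `|ax³ + bx + c| > h` on some subinterval of
`[−1/2, 1/2]` of length `1/8`. -/
theorem cubic_uniform_lower_bound_on_subinterval :
    ∃ h > (0 : ℝ), ∀ a b c : ℝ, a ^ 2 + b ^ 2 + c ^ 2 = 1 →
      ∃ x₀ : ℝ, -(1 / 2) ≤ x₀ ∧ x₀ + 1 / 8 ≤ 1 / 2 ∧
        ∀ x ∈ Set.Icc x₀ (x₀ + 1 / 8), h < |a * x ^ 3 + b * x + c| := by
  refine ⟨1/2048, by norm_num, fun a b c hsum => ?_⟩
  by_cases H1 : ∀ x ∈ Set.Icc (-(1/2) : ℝ) (-(1/2) + 1/8), (1/2048 : ℝ) < |a * x ^ 3 + b * x + c|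
  · exact ⟨-(1/2), le_refl _, by norm_num, H1⟩
  by_cases H2 : ∀ x ∈ Set.Icc (-(1/4) : ℝ) (-(1/4) + 1/8), (1/2048 : ℝ) < |a * x ^ 3 + b * x + c|
  · exact ⟨-(1/4), by norm_num, by norm_num, H2⟩
  by_cases H3 : ∀ x ∈ Set.Icc (0 : ℝ) ((0:ℝ) + 1/8), (1/2048 : ℝ) < |a * x ^ 3 + b * x + c|
  · exact ⟨0, by norm_num, by norm_num, by simpa using H3⟩
  by_cases H4 : ∀ x ∈ Set.Icc (1/4 : ℝ) ((1/4:ℝ) + 1/8), (1/2048 : ℝ) < |a * x ^ 3 + b * x + c|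
  · exact ⟨1/4, by norm_num, by norm_num, H4⟩
  exfalso
  push_neg at H1 H2 H3 H4
  obtain ⟨x₁, hx₁, hy₁⟩ := H1
  obtain ⟨x₂, hx₂, hy₂⟩ := H2
  obtain ⟨x₃, hx₃, hy₃⟩ := H3
  obtain ⟨x₄, hx₄, hy₄⟩ := H4
  rw [Set.mem_Icc] at hx₁ hx₂ hx₃ hx₄
  have := key a b c x₁ x₂ x₃ x₄
    (by linarith [hx₁.1]) (by linarith [hx₁.2])
    (by linarith [hx₂.1]) (by linarith [hx₂.2])
    (by linarith [hx₃.1]) (by linarith [hx₃.2])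
    (by linarith [hx₄.1]) (by linarith [hx₄.2])
    (by rw [show a*x₁^3+b*x₁+c = a*x₁^3+b*x₁+c from rfl]; exact_mod_cast hy₁)
    (by exact_mod_cast hy₂) (by exact_mod_cast hy₃) (by exact_mod_cast hy₄)
  linarith [hsum, this]
end
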